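/- Let (X,ρ_X) and (Y,ρ_Y) be nonempty compact metric spaces, with associated compact quantum metric spaces (Lip(X),L_{ρ_X}) and (Lip(Y),L_{ρ_Y}). If dist_q((Lip(X),L_{ρ_X}), (Lip(Y),L_{ρ_Y})) = 0, then dist_GH(X,Y) = 0; that is, X and Y are isometric. -/

import Mathlib

open scoped ENNReal NNReal

/-- An order-unit space in the sense of Kadison: a partially ordered real vector
space with a positive order unit `e` satisfying the order-unit property and the
Archimedean property. -/
structure OrderUnitSpace : Type 1 where
  carrier : Type
  [toAddCommGroup : AddCommGroup carrier]
  [toModule : Module ℝ carrier]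
  [toPartialOrder : PartialOrder carrier]
  add_le_add_left' : ∀ a b : carrier, a ≤ b → ∀ c : carrier, c + a ≤ c + b
  smul_nonneg' : ∀ (r : ℝ) (a : carrier), 0 ≤ r → 0 ≤ a → 0 ≤ r • a
  e : carrier
  e_nonneg : 0 ≤ e
  orderUnit : ∀ a : carrier, ∃ r : ℝ, a ≤ r • e
  arch : ∀ a : carrier, (∀ r : ℝ, 0 < r → a ≤ r • e) → a ≤ 0

attribute [instance] OrderUnitSpace.toAddCommGroup OrderUnitSpace.toModule
  OrderUnitSpace.toPartialOrder

/-- The topology generated by the open balls of a distance function. -/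
def ballTopology {S : Type*} (ρ : S → S → ℝ≥0∞) : TopologicalSpace S :=
  TopologicalSpace.generateFrom
    {U : Set S | ∃ (μ : S) (ε : ℝ≥0∞), 0 < ε ∧ U = {ν | ρ μ ν < ε}}

/-- The quotient seminorm of `L` along the surjection `π`. -/
noncomputable def quotientSeminorm {α β : Type*} (π : α → β) (L : α → ℝ) (b : β) : ℝ :=
  sInf {r : ℝ | ∃ a, π a = b ∧ L a = r}

/-- `L` induces `LB` via `π`, i.e. `LB` is the quotient seminorm of `L` for `π`. -/
def Induces {α β : Type*} (π : α → β) (L : α → ℝ) (LB : β → ℝ) : Prop :=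
  ∀ b, LB b = quotientSeminorm π L b

/-- Hausdorff distance between two subsets with respect to a distance function. -/
noncomputable def hausdorffDistWith {S : Type*} (ρ : S → S → ℝ≥0∞) (T U : Set S) : ℝ≥0∞ :=
  max (⨆ t ∈ T, ⨅ u ∈ U, ρ t u) (⨆ u ∈ U, ⨅ t ∈ T, ρ t u)

namespace OrderUnitSpace

variable (A B : OrderUnitSpace)

theorem le_of_sub_nonneg'' {x y : A.carrier} (h : 0 ≤ y - x) : x ≤ y := by
  have h2 := A.add_le_add_left' 0 (y - x) h x
  have h3 : x + (y - x) = y := by abel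
  rw [add_zero, h3] at h2
  exact h2

theorem smul_e_mono {r s : ℝ} (h : r ≤ s) : r • A.e ≤ s • A.e := by
  apply A.le_of_sub_nonneg''
  have h3 : s • A.e - r • A.e = (s - r) • A.e := by rw [sub_smul]
  rw [h3]
  exact A.smul_nonneg' _ _ (by linarith) A.e_nonneg

/-- The order-unit norm. -/
noncomputable def onorm (a : A.carrier) : ℝ :=
  sInf {r : ℝ | -(r • A.e) ≤ a ∧ a ≤ r • A.e}

/-- A state: a unital positive linear functional. -/
def IsState (μ : A.carrier →ₗ[ℝ] ℝ) : Prop :=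
  μ A.e = 1 ∧ ∀ a : A.carrier, 0 ≤ a → 0 ≤ μ a

/-- The state space. -/
def State : Type := {μ : A.carrier →ₗ[ℝ] ℝ // A.IsState μ}

/-- The weak-* topology on the state space. -/
instance : TopologicalSpace A.State :=
  TopologicalSpace.induced (fun μ : A.State => (μ.1 : A.carrier → ℝ)) Pi.topologicalSpace

/-- The metric `ρ_L` on the state space defined by a seminorm `L`. -/
noncomputable def rho (L : Seminorm ℝ A.carrier) (μ ν : A.State) : ℝ≥0∞ :=
  ⨆ a : {a : A.carrier // L a ≤ 1}, ENNReal.ofReal |μ.1 a.1 - ν.1 a.1|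

/-- A Lipschitz seminorm: its null space is exactly `ℝ e`. -/
def IsLipschitz (L : Seminorm ℝ A.carrier) : Prop :=
  ∀ a : A.carrier, L a = 0 ↔ ∃ t : ℝ, a = t • A.e

/-- A Lip-norm: a Lipschitz seminorm whose metric `ρ_L` induces the weak-* topology. -/
def IsLipNorm (L : Seminorm ℝ A.carrier) : Prop :=
  A.IsLipschitz L ∧ ballTopology (A.rho L) = (inferInstance : TopologicalSpace A.State)

/-- The diameter of the state space for `ρ_L`. -/
noncomputable def diam (L : Seminorm ℝ A.carrier) : ℝ≥0∞ :=
  ⨆ (μ : A.State) (ν : A.State), A.rho L μ ν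

/-- The radius: half the diameter. -/
noncomputable def radius (L : Seminorm ℝ A.carrier) : ℝ≥0∞ := A.diam L / 2

/-- Morphism of order-unit spaces: a unital positive linear map. -/
def IsMorphism (f : A.carrier →ₗ[ℝ] B.carrier) : Prop :=
  f A.e = B.e ∧ ∀ a : A.carrier, 0 ≤ a → 0 ≤ f a

/-- Pull back a state along a morphism; this is `S(π)`. -/
noncomputable def pullState (f : A.carrier →ₗ[ℝ] B.carrier) (hf : A.IsMorphism B f)
    (μ : B.State) : A.State :=
  ⟨(μ.1).comp f, by
    constructor
    · rw [LinearMap.comp_apply, hf.1]; exact μ.2.1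
    · intro a ha; exact μ.2.2 _ (hf.2 a ha)⟩

/-- The direct sum `A ⊕ B` as an order-unit space. -/
@[reducible] def prod : OrderUnitSpace where
  carrier := A.carrier × B.carrier
  add_le_add_left' := by
    intro a b hab c
    rw [Prod.le_def] at hab ⊢
    exact ⟨A.add_le_add_left' _ _ hab.1 _, B.add_le_add_left' _ _ hab.2 _⟩
  smul_nonneg' := by
    intro r a hr ha
    rw [Prod.le_def] at ha ⊢
    exact ⟨A.smul_nonneg' r a.1 hr ha.1, B.smul_nonneg' r a.2 hr ha.2⟩
  e := (A.e, B.e)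
  e_nonneg := by
    rw [Prod.le_def]
    exact ⟨A.e_nonneg, B.e_nonneg⟩
  orderUnit := by
    intro a
    obtain ⟨r₁, h1⟩ := A.orderUnit a.1
    obtain ⟨r₂, h2⟩ := B.orderUnit a.2
    refine ⟨max r₁ r₂, ?_⟩
    rw [Prod.le_def]
    exact ⟨le_trans h1 (A.smul_e_mono (le_max_left _ _)),
      le_trans h2 (B.smul_e_mono (le_max_right _ _))⟩
  arch := by
    intro a h
    rw [Prod.le_def]
    exact ⟨A.arch a.1 fun r hr => ((Prod.le_def.mp (h r hr)).1),
      B.arch a.2 fun r hr => ((Prod.le_def.mp (h r hr)).2)⟩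

/-- The embedding of `S(A)` into `S(A ⊕ B)` dual to the first coordinate projection. -/
noncomputable def leftState (μ : A.State) : (A.prod B).State :=
  ⟨(μ.1).comp (LinearMap.fst ℝ A.carrier B.carrier), by
    constructor
    · exact μ.2.1
    · intro p hp; exact μ.2.2 p.1 hp.1⟩

/-- The embedding of `S(B)` into `S(A ⊕ B)` dual to the second coordinate projection. -/
noncomputable def rightState (ν : B.State) : (A.prod B).State :=
  ⟨(ν.1).comp (LinearMap.snd ℝ A.carrier B.carrier), by
    constructor
    · exact ν.2.1
    · intro p hp; exact ν.2.2 p.2 hp.2⟩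

/-- The set `M(L_A, L_B)` of Lip-norms on `A ⊕ B` inducing `L_A` and `L_B`
via the coordinate projections. -/
def admissible (LA : Seminorm ℝ A.carrier) (LB : Seminorm ℝ B.carrier) :
    Set (Seminorm ℝ (A.prod B).carrier) :=
  {L | (A.prod B).IsLipNorm L ∧
    Induces (Prod.fst : A.carrier × B.carrier → A.carrier) (fun p => L p) (fun a => LA a) ∧
    Induces (Prod.snd : A.carrier × B.carrier → B.carrier) (fun p => L p) (fun b => LB b)}

/-- Quantum Gromov–Hausdorff distance. -/
noncomputable def distq (LA : Seminorm ℝ A.carrier) (LB : Seminorm ℝ B.carrier) : ℝ≥0∞ :=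
  ⨅ L ∈ A.admissible B LA LB,
    hausdorffDistWith ((A.prod B).rho L) (Set.range (A.leftState B)) (Set.range (A.rightState B))

end OrderUnitSpace

/-- The space of real-valued Lipschitz functions on a metric space, as a submodule
of `X → ℝ`. -/
def lipSubmodule (X : Type) [MetricSpace X] : Submodule ℝ (X → ℝ) where
  carrier := {f : X → ℝ | ∃ K : ℝ≥0, LipschitzWith K f}
  add_mem' := by
    rintro f g ⟨Kf, hf⟩ ⟨Kg, hg⟩
    exact ⟨Kf + Kg, hf.add hg⟩
  zero_mem' := ⟨0, LipschitzWith.const' (0 : ℝ)⟩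
  smul_mem' := by
    rintro c f ⟨K, hf⟩
    exact ⟨‖c‖₊ * K, (lipschitzWith_smul c).comp hf⟩

theorem mem_lipSubmodule {X : Type} [MetricSpace X] {f : X → ℝ} :
    f ∈ lipSubmodule X ↔ ∃ K : ℝ≥0, LipschitzWith K f := Iff.rfl

/-- The order-unit space of real-valued Lipschitz functions on a nonempty compact
metric space, with pointwise order and order unit the constant function `1`. -/
@[reducible] noncomputable def lipOUS (X : Type) [MetricSpace X] [CompactSpace X] [Nonempty X] :
    OrderUnitSpace where
  carrier := lipSubmodule X
  add_le_add_left' := by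
    intro f g hfg h
    rw [← Subtype.coe_le_coe] at hfg ⊢
    intro x
    simp only [Submodule.coe_add, Pi.add_apply]
    exact add_le_add le_rfl (hfg x)
  smul_nonneg' := by
    intro r f hr hf
    rw [← Subtype.coe_le_coe] at hf ⊢
    intro x
    simp only [Submodule.coe_smul, Pi.smul_apply, smul_eq_mul, ZeroMemClass.coe_zero,
      Pi.zero_apply] at hf ⊢
    exact mul_nonneg hr (hf x)
  e := ⟨fun _ => (1 : ℝ), ⟨0, LipschitzWith.const' (1 : ℝ)⟩⟩
  e_nonneg := by
    rw [← Subtype.coe_le_coe]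
    intro x
    simp
  orderUnit := by
    intro f
    obtain ⟨K, hK⟩ := mem_lipSubmodule.mp f.2
    obtain ⟨x₀, -, hx₀⟩ := isCompact_univ.exists_isMaxOn Set.univ_nonempty
      hK.continuous.continuousOn
    refine ⟨f.1 x₀, ?_⟩
    rw [← Subtype.coe_le_coe]
    intro x
    simp only [Submodule.coe_smul, Pi.smul_apply, smul_eq_mul, mul_one]
    exact isMaxOn_iff.mp hx₀ x (Set.mem_univ x)
  arch := by
    intro f h
    rw [← Subtype.coe_le_coe]
    intro x
    simp only [ZeroMemClass.coe_zero, Pi.zero_apply]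
    refine le_of_forall_pos_le_add ?_
    intro r hr
    have := h r hr
    rw [← Subtype.coe_le_coe] at this
    have hx := this x
    simp only [Submodule.coe_smul, Pi.smul_apply, smul_eq_mul, mul_one] at hx
    linarith

/-- The Lipschitz constant of a real-valued function on a metric space:
`sup {|f x − f y| / d(x,y) : x ≠ y}`. -/
noncomputable def lipConst (X : Type) [MetricSpace X] (f : X → ℝ) : ℝ :=
  sSup ((fun p : X × X => |f p.1 - f p.2| / dist p.1 p.2) '' {p : X × X | p.1 ≠ p.2})

/-!
Fix `ε > 0` and an admissible `L` on `Lip(X) ⊕ Lip(Y)` for which the two state spaces are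
`ε`-close. Since `L` induces `L_X` and `L_Y`, the duals of the coordinate projections are
`ρ_L`-isometries, so the Dirac states of `X` and of `Y` sit isometrically in one extended
pseudometric space. The Hausdorff bound only puts `δ_x` near *some* state of `Lip(Y)`; to find a
nearby Dirac state, lift `ρ(·, x)` to `c` with `L c < 2` and let `b` be its `Y`-component. The
state `ν` that is `ε`-close to `δ_x` gives `ν(b) ≤ 2ε`, while for each `y` a state `κ_y` of
`Lip(X)` that is `ε`-close to `δ_y` gives `b(y) ≥ κ_y(ρ(·, x)) - 2ε ≥ ρ_L(δ_x, δ_y) - 3ε`. So if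
every `δ_y` were `6ε`-far from `δ_x`, then `b ≥ 3ε` and `ν(b) ≥ 3ε`. Hence `X` and `Y` are
`18ε`-close in the Gromov–Hausdorff distance for every `ε`.
-/

theorem ENNReal.le_of_forall_one_lt_le_ofReal_mul {a b : ℝ≥0∞}
    (h : ∀ r : ℝ, 1 < r → a ≤ ENNReal.ofReal r * b) : a ≤ b := by
  have hlim : Filter.Tendsto (fun r : ℝ => ENNReal.ofReal r * b) (nhdsWithin 1 (Set.Ioi 1))
      (nhds b) := by
    simpa using ENNReal.Tendsto.mul_const
      ((ENNReal.continuous_ofReal.tendsto 1).mono_left nhdsWithin_le_nhds) (Or.inl (by simp))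
  exact ge_of_tendsto hlim (eventually_nhdsWithin_of_forall h)

theorem GromovHausdorff.ghDist_le_of_isometry_of_forall_edist_le {X Y S : Type*}
    [MetricSpace X] [CompactSpace X] [Nonempty X] [MetricSpace Y] [CompactSpace Y] [Nonempty Y]
    [PseudoEMetricSpace S] {i : X → S} {j : Y → S} (hi : Isometry i) (hj : Isometry j)
    {δ : ℝ} (hδ : 0 ≤ δ) (hXY : ∀ x, ∃ y, edist (i x) (j y) ≤ ENNReal.ofReal δ)
    (hYX : ∀ y, ∃ x, edist (i x) (j y) ≤ ENNReal.ofReal δ) :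
    GromovHausdorff.ghDist X Y ≤ 3 * δ := by
  have hclose : ∀ {a b : X} {c d : Y}, edist (i a) (j c) ≤ ENNReal.ofReal δ →
      edist (i b) (j d) ≤ ENNReal.ofReal δ → |dist a b - dist c d| ≤ 2 * δ := by
    intro a b c d hac hbd
    have h₁ : edist (i a) (i b) ≤ ENNReal.ofReal δ + edist (j c) (j d) + ENNReal.ofReal δ :=
      (edist_triangle4 _ (j c) (j d) _).trans (by rw [edist_comm (j d)]; gcongr)
    have h₂ : edist (j c) (j d) ≤ ENNReal.ofReal δ + edist (i a) (i b) + ENNReal.ofReal δ :=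
      (edist_triangle4 _ (i a) (i b) _).trans (by rw [edist_comm (j c)]; gcongr)
    rw [hi.edist_eq, hj.edist_eq, edist_dist, edist_dist, ← ENNReal.ofReal_add hδ dist_nonneg,
      ← ENNReal.ofReal_add (by positivity) hδ,
      ENNReal.ofReal_le_ofReal_iff (by positivity)] at h₁ h₂
    rw [abs_sub_le_iff]
    constructor <;> linarith
  choose Φ hΦ using hXY
  have hcover : ∀ y, ∃ x : (Set.univ : Set X), dist y (Φ x) ≤ 2 * δ := fun y => by
    obtain ⟨x, hx⟩ := hYX y
    refine ⟨⟨x, trivial⟩, ?_⟩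
    simpa [dist_comm y] using hclose hx (hΦ x)
  have := GromovHausdorff.ghDist_le_of_approx_subsets (fun x : (Set.univ : Set X) => Φ x)
    (fun x => ⟨x, trivial, (dist_self x).le⟩) hcover fun x x' => hclose (hΦ x) (hΦ x')
  linarith

section QuotientSeminorm

variable {α β : Type*} {π : α → β} {L : α → ℝ}

theorem quotientSeminorm_le (hL : ∀ a, 0 ≤ L a) (a : α) : quotientSeminorm π L (π a) ≤ L a :=
  csInf_le ⟨0, by rintro _ ⟨a', -, rfl⟩; exact hL a'⟩ ⟨a, rfl, rfl⟩

theorem exists_lt_of_quotientSeminorm_lt {b : β} (hb : b ∈ Set.range π) {t : ℝ}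
    (h : quotientSeminorm π L b < t) : ∃ a, π a = b ∧ L a < t := by
  obtain ⟨a₀, rfl⟩ := hb
  obtain ⟨_, ⟨a, ha, rfl⟩, hlt⟩ :=
    exists_lt_of_csInf_lt (s := {r | ∃ a, π a = π a₀ ∧ L a = r}) ⟨L a₀, a₀, rfl, rfl⟩ h
  exact ⟨a, ha, hlt⟩

end QuotientSeminorm

theorem exists_lt_of_hausdorffDistWith_lt {S : Type*} {ρ : S → S → ℝ≥0∞} {T U : Set S}
    {c : ℝ≥0∞} (h : hausdorffDistWith ρ T U < c) :
    (∀ t ∈ T, ∃ u ∈ U, ρ t u < c) ∧ ∀ u ∈ U, ∃ t ∈ T, ρ t u < c := by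
  obtain ⟨hT, hU⟩ := max_lt_iff.1 h
  refine ⟨fun t ht => ?_, fun u hu => ?_⟩
  · simpa only [iInf_lt_iff, exists_prop] using (le_iSup₂ t ht).trans_lt hT
  · simpa only [iInf_lt_iff, exists_prop] using (le_iSup₂ u hu).trans_lt hU

namespace OrderUnitSpace

instance (A : OrderUnitSpace) : IsOrderedAddMonoid A.carrier where
  add_le_add_left a b h c := by simpa only [add_comm _ c] using A.add_le_add_left' a b h c

variable {A B : OrderUnitSpace}

theorem IsState.mono {μ : A.carrier →ₗ[ℝ] ℝ} (hμ : A.IsState μ) {a b : A.carrier} (h : a ≤ b) :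
    μ a ≤ μ b :=
  sub_nonneg.1 (map_sub μ b a ▸ hμ.2 _ (sub_nonneg.2 h))

theorem IsState.map_smul_e {μ : A.carrier →ₗ[ℝ] ℝ} (hμ : A.IsState μ) (r : ℝ) :
    μ (r • A.e) = r := by
  rw [map_smul, hμ.1, smul_eq_mul, mul_one]

section Rho

variable {L : Seminorm ℝ A.carrier}

theorem le_rho (μ ν : A.State) {a : A.carrier} (ha : L a ≤ 1) :
    ENNReal.ofReal |μ.1 a - ν.1 a| ≤ A.rho L μ ν :=
  le_iSup (fun b : {b // L b ≤ 1} => ENNReal.ofReal |μ.1 b.1 - ν.1 b.1|) ⟨a, ha⟩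

theorem ofReal_abs_sub_le_mul_rho (μ ν : A.State) {a : A.carrier} {r : ℝ} (hr : 0 < r)
    (ha : L a ≤ r) : ENNReal.ofReal |μ.1 a - ν.1 a| ≤ ENNReal.ofReal r * A.rho L μ ν := by
  have hscaled : L (r⁻¹ • a) ≤ 1 := by
    rw [map_smul_eq_mul, Real.norm_eq_abs, abs_of_pos (inv_pos.2 hr)]
    exact inv_mul_le_one_of_le₀ ha hr.le
  calc ENNReal.ofReal |μ.1 a - ν.1 a|
      = ENNReal.ofReal r * ENNReal.ofReal |μ.1 (r⁻¹ • a) - ν.1 (r⁻¹ • a)| := by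
        rw [← ENNReal.ofReal_mul hr.le, map_smul, map_smul, smul_eq_mul, smul_eq_mul, ← mul_sub,
          abs_mul, abs_of_pos (inv_pos.2 hr), mul_inv_cancel_left₀ hr.ne']
    _ ≤ ENNReal.ofReal r * A.rho L μ ν := by gcongr; exact le_rho μ ν hscaled

theorem abs_sub_le_mul_of_rho_le (μ ν : A.State) {a : A.carrier} {r ε : ℝ} (hr : 0 < r)
    (ha : L a ≤ r) (hε : 0 ≤ ε) (h : A.rho L μ ν ≤ ENNReal.ofReal ε) :
    |μ.1 a - ν.1 a| ≤ r * ε := by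
  rw [← ENNReal.ofReal_le_ofReal_iff (by positivity), ENNReal.ofReal_mul hr.le]
  exact (ofReal_abs_sub_le_mul_rho μ ν hr ha).trans (by gcongr)

theorem rho_comm (L : Seminorm ℝ A.carrier) (μ ν : A.State) : A.rho L μ ν = A.rho L ν μ := by
  simp only [rho, abs_sub_comm]

theorem rho_self (L : Seminorm ℝ A.carrier) (μ : A.State) : A.rho L μ μ = 0 := by
  simp [rho]

theorem rho_triangle (L : Seminorm ℝ A.carrier) (μ ν κ : A.State) :
    A.rho L μ κ ≤ A.rho L μ ν + A.rho L ν κ := by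
  refine iSup_le fun a => ?_
  calc ENNReal.ofReal |μ.1 a.1 - κ.1 a.1|
      ≤ ENNReal.ofReal |μ.1 a.1 - ν.1 a.1| + ENNReal.ofReal |ν.1 a.1 - κ.1 a.1| := by
        rw [← ENNReal.ofReal_add (abs_nonneg _) (abs_nonneg _)]
        exact ENNReal.ofReal_le_ofReal (abs_sub_le _ _ _)
    _ ≤ A.rho L μ ν + A.rho L ν κ := add_le_add (le_rho μ ν a.2) (le_rho ν κ a.2)

/-- Not an instance: `A.State` already carries the weak-* topology. -/
noncomputable abbrev rhoPseudoEMetricSpace (L : Seminorm ℝ A.carrier) :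
    PseudoEMetricSpace A.State where
  edist := A.rho L
  edist_self := rho_self L
  edist_comm := rho_comm L
  edist_triangle := rho_triangle L

end Rho

section PullState

variable {π : A.carrier →ₗ[ℝ] B.carrier} (hπ : A.IsMorphism B π)
  {L : Seminorm ℝ A.carrier} {LB : Seminorm ℝ B.carrier}

theorem pullState_apply (μ : B.State) (a : A.carrier) :
    (A.pullState B π hπ μ).1 a = μ.1 (π a) := rfl

theorem rho_pullState_le (hI : Induces π L LB) (μ ν : B.State) :
    A.rho L (A.pullState B π hπ μ) (A.pullState B π hπ ν) ≤ B.rho LB μ ν :=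
  iSup_le fun a => le_rho μ ν <|
    ((hI (π a)).trans_le (quotientSeminorm_le (apply_nonneg L) a.1)).trans a.2

theorem rho_pullState (hπs : Function.Surjective π) (hI : Induces π L LB) (μ ν : B.State) :
    A.rho L (A.pullState B π hπ μ) (A.pullState B π hπ ν) = B.rho LB μ ν := by
  refine le_antisymm (rho_pullState_le hπ hI μ ν) (iSup_le ?_)
  rintro ⟨b, hb⟩
  refine ENNReal.le_of_forall_one_lt_le_ofReal_mul fun r hr => ?_
  obtain ⟨a, rfl, ha⟩ := exists_lt_of_quotientSeminorm_lt (hπs b) ((hI b) ▸ hb.trans_lt hr)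
  exact ofReal_abs_sub_le_mul_rho _ _ (by linarith) ha.le

end PullState

theorem isMorphism_fst (A B : OrderUnitSpace) :
    (A.prod B).IsMorphism A (LinearMap.fst ℝ A.carrier B.carrier) :=
  ⟨rfl, fun _ h => h.1⟩

theorem isMorphism_snd (A B : OrderUnitSpace) :
    (A.prod B).IsMorphism B (LinearMap.snd ℝ A.carrier B.carrier) :=
  ⟨rfl, fun _ h => h.2⟩

end OrderUnitSpace

section Lipschitz

open OrderUnitSpace

variable {X : Type} [MetricSpace X]

theorem abs_sub_le_of_lipConst_le {f : X → ℝ} {K : ℝ≥0} (hf : LipschitzWith K f) {c : ℝ}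
    (h : lipConst X f ≤ c) (z z' : X) : |f z - f z'| ≤ c * dist z z' := by
  rcases eq_or_ne z z' with rfl | hne
  · simp
  have hbdd : BddAbove ((fun p : X × X => |f p.1 - f p.2| / dist p.1 p.2) ''
      {p : X × X | p.1 ≠ p.2}) := by
    refine ⟨K, ?_⟩
    rintro _ ⟨p, hp, rfl⟩
    rw [div_le_iff₀ (dist_pos.2 hp), ← Real.dist_eq]
    exact hf.dist_le_mul p.1 p.2
  have hq : |f z - f z'| / dist z z' ≤ c := (le_csSup hbdd ⟨(z, z'), hne, rfl⟩).trans h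
  rwa [div_le_iff₀ (dist_pos.2 hne)] at hq

theorem lipConst_le {f : X → ℝ} {c : ℝ} (hc : 0 ≤ c)
    (h : ∀ z z', |f z - f z'| ≤ c * dist z z') : lipConst X f ≤ c := by
  refine Real.sSup_le ?_ hc
  rintro _ ⟨p, hp, rfl⟩
  rw [div_le_iff₀ (dist_pos.2 hp)]
  exact h p.1 p.2

theorem lipConst_dist_le_one (x : X) : lipConst X (fun z => dist z x) ≤ 1 :=
  lipConst_le zero_le_one fun z z' => (one_mul (dist z z')).symm ▸ abs_dist_sub_le z z' x

variable [CompactSpace X] [Nonempty X]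

theorem lipOUS_le_iff {f g : (lipOUS X).carrier} : f ≤ g ↔ ∀ x, f.1 x ≤ g.1 x :=
  Subtype.coe_le_coe.symm

noncomputable def diracState (x : X) : (lipOUS X).State :=
  ⟨{ toFun := fun f => f.1 x
     map_add' := fun _ _ => rfl
     map_smul' := fun _ _ => rfl },
   rfl, fun _ hf => lipOUS_le_iff.1 hf x⟩

theorem diracState_apply (x : X) (f : (lipOUS X).carrier) : (diracState x).1 f = f.1 x := rfl

noncomputable def distFun (x : X) : (lipOUS X).carrier :=
  ⟨fun z => dist z x, 1, LipschitzWith.dist_left x⟩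

theorem distFun_apply (x z : X) : (distFun x).1 z = dist z x := rfl

theorem distFun_nonneg (x : X) : 0 ≤ distFun x :=
  lipOUS_le_iff.2 fun _ => dist_nonneg

variable {LX : Seminorm ℝ (lipOUS X).carrier}

theorem rho_diracState_le (hLX : ∀ f : (lipOUS X).carrier, LX f = lipConst X f.1)
    (μ : (lipOUS X).State) (x : X) :
    (lipOUS X).rho LX μ (diracState x) ≤ ENNReal.ofReal (μ.1 (distFun x)) := by
  refine iSup_le fun ⟨f, hf⟩ => ENNReal.ofReal_le_ofReal ?_
  obtain ⟨K, hK⟩ := f.2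
  have hfx : ∀ z, |f.1 z - f.1 x| ≤ dist z x := fun z => by
    simpa using abs_sub_le_of_lipConst_le hK ((hLX f).symm.trans_le hf) z x
  have hlo : f.1 x • (lipOUS X).e - distFun x ≤ f := lipOUS_le_iff.2 fun z =>
    show f.1 x * 1 - dist z x ≤ f.1 z by linarith [abs_le.1 (hfx z)]
  have hhi : f ≤ f.1 x • (lipOUS X).e + distFun x := lipOUS_le_iff.2 fun z =>
    show f.1 z ≤ f.1 x * 1 + dist z x by linarith [abs_le.1 (hfx z)]
  have h₁ := μ.2.mono hlo
  have h₂ := μ.2.mono hhi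
  rw [map_sub, μ.2.map_smul_e] at h₁
  rw [map_add, μ.2.map_smul_e] at h₂
  rw [diracState_apply, abs_sub_le_iff]
  constructor <;> linarith

theorem rho_diracState_diracState (hLX : ∀ f : (lipOUS X).carrier, LX f = lipConst X f.1)
    (x x' : X) :
    (lipOUS X).rho LX (diracState x) (diracState x') = ENNReal.ofReal (dist x x') := by
  refine le_antisymm ?_ ?_
  · exact rho_diracState_le hLX (diracState x) x'
  have hd : LX (distFun x') ≤ 1 := (hLX _).trans_le (lipConst_dist_le_one x')
  have := le_rho (diracState x) (diracState x') hd
  rwa [diracState_apply, diracState_apply, distFun_apply, distFun_apply, dist_self, sub_zero,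
    abs_of_nonneg dist_nonneg] at this

end Lipschitz

section DiracStates

open OrderUnitSpace

variable {X Y : Type} [MetricSpace X] [CompactSpace X] [Nonempty X]
  [MetricSpace Y] [CompactSpace Y] [Nonempty Y]
  {C : OrderUnitSpace} {L : Seminorm ℝ C.carrier} {LX : Seminorm ℝ (lipOUS X).carrier}
  {π₁ : C.carrier →ₗ[ℝ] (lipOUS X).carrier} {π₂ : C.carrier →ₗ[ℝ] (lipOUS Y).carrier}
  (hπ₁ : C.IsMorphism (lipOUS X) π₁) (hπ₂ : C.IsMorphism (lipOUS Y) π₂)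

theorem exists_rho_pullState_diracState_le
    (hLX : ∀ f : (lipOUS X).carrier, LX f = lipConst X f.1) (hπ₁s : Function.Surjective π₁)
    (hI : Induces π₁ L LX) {ε : ℝ} (hε : 0 < ε)
    (hnear₁ : ∀ μ, ∃ ν, C.rho L (C.pullState _ π₁ hπ₁ μ) (C.pullState _ π₂ hπ₂ ν) <
      ENNReal.ofReal ε)
    (hnear₂ : ∀ ν, ∃ μ, C.rho L (C.pullState _ π₁ hπ₁ μ) (C.pullState _ π₂ hπ₂ ν) <
      ENNReal.ofReal ε) (x : X) :
    ∃ y, C.rho L (C.pullState _ π₁ hπ₁ (diracState x)) (C.pullState _ π₂ hπ₂ (diracState y)) ≤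
      ENNReal.ofReal (6 * ε) := by
  obtain ⟨ν, hν⟩ := hnear₁ (diracState x)
  obtain ⟨c, hc, hLc⟩ : ∃ c, π₁ c = distFun x ∧ L c < 2 :=
    exists_lt_of_quotientSeminorm_lt (hπ₁s _)
      ((hI _).symm.trans_le ((hLX _).trans_le (lipConst_dist_le_one x)) |>.trans_lt one_lt_two)
  have hνc : ν.1 (π₂ c) ≤ 2 * ε := by
    have := abs_sub_le_mul_of_rho_le _ _ two_pos hLc.le hε.le hν.le
    rw [pullState_apply, pullState_apply, hc, diracState_apply, distFun_apply, dist_self,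
      zero_sub, abs_neg] at this
    exact (le_abs_self _).trans this
  by_contra! hfar
  suffices hge : (3 * ε) • (lipOUS Y).e ≤ π₂ c by
    have := ν.2.mono hge
    rw [ν.2.map_smul_e] at this
    linarith
  refine lipOUS_le_iff.2 fun y => ?_
  obtain ⟨κ, hκ⟩ := hnear₂ (diracState y)
  have hκc : |κ.1 (distFun x) - (π₂ c).1 y| ≤ 2 * ε := by
    have := abs_sub_le_mul_of_rho_le _ _ two_pos hLc.le hε.le hκ.le
    rwa [pullState_apply, pullState_apply, hc, diracState_apply] at this
  have hκx : 0 ≤ κ.1 (distFun x) := κ.2.2 _ (distFun_nonneg x)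
  have hxy : C.rho L (C.pullState _ π₁ hπ₁ (diracState x)) (C.pullState _ π₂ hπ₂ (diracState y))
      ≤ ENNReal.ofReal (κ.1 (distFun x) + ε) := calc
    _ ≤ C.rho L (C.pullState _ π₁ hπ₁ (diracState x)) (C.pullState _ π₁ hπ₁ κ) +
        C.rho L (C.pullState _ π₁ hπ₁ κ) (C.pullState _ π₂ hπ₂ (diracState y)) :=
      rho_triangle _ _ _ _
    _ ≤ ENNReal.ofReal (κ.1 (distFun x)) + ENNReal.ofReal ε := by
      rw [rho_comm]
      exact add_le_add ((rho_pullState_le hπ₁ hI _ _).trans (rho_diracState_le hLX κ x)) hκ.le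
    _ = ENNReal.ofReal (κ.1 (distFun x) + ε) := (ENNReal.ofReal_add hκx hε.le).symm
  have h6 : 6 * ε < κ.1 (distFun x) + ε :=
    (ENNReal.ofReal_lt_ofReal_iff_of_nonneg (by positivity)).1 ((hfar y).trans_le hxy)
  show 3 * ε * 1 ≤ (π₂ c).1 y
  linarith [(abs_le.1 hκc).2]

end DiracStates

section Product

open OrderUnitSpace

variable {X Y : Type} [MetricSpace X] [CompactSpace X] [Nonempty X]
  [MetricSpace Y] [CompactSpace Y] [Nonempty Y]
  {LX : Seminorm ℝ (lipOUS X).carrier} {LY : Seminorm ℝ (lipOUS Y).carrier}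
  {L : Seminorm ℝ ((lipOUS X).prod (lipOUS Y)).carrier}

theorem ghDist_le_of_hausdorffDistWith_lt
    (hLX : ∀ f : (lipOUS X).carrier, LX f = lipConst X f.1)
    (hLY : ∀ g : (lipOUS Y).carrier, LY g = lipConst Y g.1)
    (hIX : Induces (Prod.fst : (lipOUS X).carrier × (lipOUS Y).carrier → (lipOUS X).carrier)
      (fun p => L p) (fun a => LX a))
    (hIY : Induces (Prod.snd : (lipOUS X).carrier × (lipOUS Y).carrier → (lipOUS Y).carrier)
      (fun p => L p) (fun b => LY b))
    {ε : ℝ} (hε : 0 < ε)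
    (hH : hausdorffDistWith (((lipOUS X).prod (lipOUS Y)).rho L)
      (Set.range ((lipOUS X).leftState (lipOUS Y)))
      (Set.range ((lipOUS X).rightState (lipOUS Y))) < ENNReal.ofReal ε) :
    GromovHausdorff.ghDist X Y ≤ 3 * (6 * ε) := by
  let _ := ((lipOUS X).prod (lipOUS Y)).rhoPseudoEMetricSpace L
  have hfst := isMorphism_fst (lipOUS X) (lipOUS Y)
  have hsnd := isMorphism_snd (lipOUS X) (lipOUS Y)
  let i (μ : (lipOUS X).State) := ((lipOUS X).prod (lipOUS Y)).pullState _ _ hfst μ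
  let j (ν : (lipOUS Y).State) := ((lipOUS X).prod (lipOUS Y)).pullState _ _ hsnd ν
  obtain ⟨hXY, hYX⟩ := exists_lt_of_hausdorffDistWith_lt hH
  have hnear₁ : ∀ μ, ∃ ν, edist (i μ) (j ν) < ENNReal.ofReal ε := fun μ => by
    obtain ⟨_, ⟨ν, rfl⟩, h⟩ := hXY _ ⟨μ, rfl⟩
    exact ⟨ν, h⟩
  have hnear₂ : ∀ ν, ∃ μ, edist (i μ) (j ν) < ENNReal.ofReal ε := fun ν => by
    obtain ⟨_, ⟨μ, rfl⟩, h⟩ := hYX _ ⟨ν, rfl⟩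
    exact ⟨μ, h⟩
  refine GromovHausdorff.ghDist_le_of_isometry_of_forall_edist_le
    (i := fun x => i (diracState x)) (j := fun y => j (diracState y)) ?_ ?_ (by positivity)
    (exists_rho_pullState_diracState_le hfst hsnd hLX Prod.fst_surjective hIX hε hnear₁ hnear₂)
    fun y => ?_
  · exact fun x x' => (rho_pullState hfst Prod.fst_surjective hIX _ _).trans
      ((rho_diracState_diracState hLX x x').trans (edist_dist x x').symm)
  · exact fun y y' => (rho_pullState hsnd Prod.snd_surjective hIY _ _).trans
      ((rho_diracState_diracState hLY y y').trans (edist_dist y y').symm)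
  · obtain ⟨x, hx⟩ := exists_rho_pullState_diracState_le hsnd hfst hLY Prod.snd_surjective hIY
      hε (fun ν => (hnear₂ ν).imp fun _ h => (edist_comm _ _).trans_lt h)
      (fun μ => (hnear₁ μ).imp fun _ h => (edist_comm _ _).trans_lt h) y
    exact ⟨x, (edist_comm _ _).trans_le hx⟩

end Product

theorem ghDist_eq_zero_of_distq_eq_zero_general (X Y : Type)
    [MetricSpace X] [CompactSpace X] [Nonempty X]
    [MetricSpace Y] [CompactSpace Y] [Nonempty Y]
    (LX : Seminorm ℝ (lipOUS X).carrier) (LY : Seminorm ℝ (lipOUS Y).carrier)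
    (hLX : ∀ f : (lipOUS X).carrier, LX f = lipConst X f.1)
    (hLY : ∀ g : (lipOUS Y).carrier, LY g = lipConst Y g.1)
    (h : (lipOUS X).distq (lipOUS Y) LX LY = 0) :
    GromovHausdorff.ghDist X Y = 0 ∧ Nonempty (X ≃ᵢ Y) := by
  have hsmall : ∀ ε > 0, GromovHausdorff.ghDist X Y ≤ 3 * (6 * ε) := fun ε hε => by
    have hlt : (lipOUS X).distq (lipOUS Y) LX LY < ENNReal.ofReal ε := by
      rw [h]
      exact ENNReal.ofReal_pos.2 hε
    simp only [OrderUnitSpace.distq, iInf_lt_iff] at hlt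
    obtain ⟨L, ⟨-, hIX, hIY⟩, hH⟩ := hlt
    exact ghDist_le_of_hausdorffDistWith_lt hLX hLY hIX hIY hε hH
  have hzero : GromovHausdorff.ghDist X Y = 0 := by
    refine le_antisymm (le_of_forall_pos_le_add fun ε hε => ?_) dist_nonneg
    linarith [hsmall (ε / 18) (by positivity)]
  exact ⟨hzero, GromovHausdorff.toGHSpace_eq_toGHSpace_iff_isometryEquiv.1
    (eq_of_dist_eq_zero hzero)⟩

/-- **Corollary 7.10 of Rieffel.** Let `(X, ρ_X)` and `(Y, ρ_Y)` be nonempty compact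
metric spaces, with associated compact quantum metric spaces `(Lip(X), L_{ρ_X})` and
`(Lip(Y), L_{ρ_Y})`. If the quantum Gromov–Hausdorff distance between them is `0`,
then `dist_GH(X, Y) = 0`, i.e. `X` and `Y` are isometric. -/
theorem ghDist_eq_zero_of_distq_eq_zero (X Y : Type)
    [MetricSpace X] [CompactSpace X] [Nonempty X]
    [MetricSpace Y] [CompactSpace Y] [Nonempty Y]
    (LX : Seminorm ℝ (lipOUS X).carrier) (LY : Seminorm ℝ (lipOUS Y).carrier)
    (hLX : ∀ f : (lipOUS X).carrier, LX f = lipConst X f.1)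
    (hLY : ∀ g : (lipOUS Y).carrier, LY g = lipConst Y g.1)
    (hLipX : (lipOUS X).IsLipNorm LX) (hLipY : (lipOUS Y).IsLipNorm LY)
    (h : (lipOUS X).distq (lipOUS Y) LX LY = 0) :
    GromovHausdorff.ghDist X Y = 0 ∧ Nonempty (X ≃ᵢ Y) :=
  ghDist_eq_zero_of_distq_eq_zero_general X Y LX LY hLX hLY h
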